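/- arXiv:2512.00810 — 4 statements merged into one kernel-verified Lean document; each statement's English description precedes it below -/
import Mathlib

section
/- Bonferroni inequality for the maximum, third order: for non-negative reals x_1, …, x_N, Σ_i x_i − Σ_{i<j} min(x_i, x_j) + Σ_{i<j<k} min(x_i, x_j, x_k) ≥ max(x_1, …, x_N). -/
open Finset

theorem bonferroni_max_third_order (N : ℕ) (hN : 0 < N) (x : Fin N → ℝ)
    (hx : ∀ i, 0 ≤ x i) :
    Finset.univ.sup' (Finset.univ_nonempty_iff.mpr ⟨⟨0, hN⟩⟩) x ≤
      (∑ i, x i) -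
        (∑ p ∈ (Finset.univ : Finset (Fin N × Fin N)).filter (fun p => p.1 < p.2),
          min (x p.1) (x p.2)) +
        ∑ t ∈ (Finset.univ : Finset (Fin N × Fin N × Fin N)).filter
            (fun t => t.1 < t.2.1 ∧ t.2.1 < t.2.2),
          min (x t.1) (min (x t.2.1) (x t.2.2)) := by
  have hne : (univ : Finset (Fin N)).Nonempty := Finset.univ_nonempty_iff.mpr ⟨⟨0, hN⟩⟩
  obtain ⟨m, -, hm⟩ := Finset.exists_mem_eq_sup' hne x
  have hmax : ∀ i, x i ≤ x m := fun i => hm ▸ Finset.le_sup' x (mem_univ i)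
  rw [hm]
  set P := (Finset.univ : Finset (Fin N × Fin N)).filter (fun p => p.1 < p.2) with hP
  set T := (Finset.univ : Finset (Fin N × Fin N × Fin N)).filter
      (fun t => t.1 < t.2.1 ∧ t.2.1 < t.2.2) with hT
  have hsplitP := Finset.sum_filter_add_sum_filter_not P (fun p => p.1 = m ∨ p.2 = m)
      (fun p => min (x p.1) (x p.2))
  have hsplitT := Finset.sum_filter_add_sum_filter_not T
      (fun t => t.1 = m ∨ t.2.1 = m ∨ t.2.2 = m)
      (fun t => min (x t.1) (min (x t.2.1) (x t.2.2)))
  have h1 : ∑ p ∈ P.filter (fun p => p.1 = m ∨ p.2 = m), min (x p.1) (x p.2)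
      = ∑ i ∈ univ.erase m, x i := by
    apply Finset.sum_nbij' (i := fun p => if p.1 = m then p.2 else p.1)
      (j := fun i => if i < m then (i, m) else (m, i))
    · rintro ⟨a, b⟩ hp
      simp only [hP, Finset.mem_filter, Finset.mem_univ, true_and] at hp
      simp only [Finset.mem_erase, Finset.mem_univ, and_true, ne_eq]
      split_ifs <;> (try dsimp only at *) <;>
        (try simp only [Prod.mk.injEq, eq_self_iff_true, true_and, and_true, or_true, true_or]) <;> omega
    · intro i hi
      simp only [Finset.mem_erase, Finset.mem_univ, and_true, ne_eq] at hi
      simp only [hP, Finset.mem_filter, Finset.mem_univ, true_and]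
      split_ifs <;> (try dsimp only at *) <;>
        (try simp only [Prod.mk.injEq, eq_self_iff_true, true_and, and_true, or_true, true_or]) <;> omega
    · rintro ⟨a, b⟩ hp
      simp only [hP, Finset.mem_filter, Finset.mem_univ, true_and] at hp
      split_ifs <;> (try dsimp only at *) <;>
        (try simp only [Prod.mk.injEq, eq_self_iff_true, true_and, and_true, or_true, true_or]) <;> omega
    · intro i hi
      simp only [Finset.mem_erase, Finset.mem_univ, and_true, ne_eq] at hi
      split_ifs <;> (try dsimp only at *) <;>
        (try simp only [Prod.mk.injEq, eq_self_iff_true, true_and, and_true, or_true, true_or]) <;> omega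
    · rintro ⟨a, b⟩ hp
      simp only [hP, Finset.mem_filter, Finset.mem_univ, true_and] at hp
      obtain ⟨hlt, hq⟩ := hp
      simp only
      split_ifs with h
      · exact min_eq_right (h ▸ hmax b)
      · have h2 : b = m := hq.resolve_left h
        rw [h2]
        exact min_eq_left (hmax a)
  have h2 : ∑ t ∈ T.filter (fun t => t.1 = m ∨ t.2.1 = m ∨ t.2.2 = m),
        min (x t.1) (min (x t.2.1) (x t.2.2))
      = ∑ p ∈ P.filter (fun p => ¬(p.1 = m ∨ p.2 = m)), min (x p.1) (x p.2) := by
    apply Finset.sum_nbij'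
      (i := fun t => if t.1 = m then (t.2.1, t.2.2) else
        if t.2.1 = m then (t.1, t.2.2) else (t.1, t.2.1))
      (j := fun p => if m < p.1 then (m, p.1, p.2) else
        if m < p.2 then (p.1, m, p.2) else (p.1, p.2, m))
    · rintro ⟨a, b, c⟩ ht
      simp only [hT, Finset.mem_filter, Finset.mem_univ, true_and] at ht
      simp only [hP, Finset.mem_filter, Finset.mem_univ, true_and, not_or]
      split_ifs <;> (try dsimp only at *) <;>
        (try simp only [Prod.mk.injEq, eq_self_iff_true, true_and, and_true, or_true, true_or]) <;> omega
    · rintro ⟨a, b⟩ hp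
      simp only [hP, Finset.mem_filter, Finset.mem_univ, true_and, not_or] at hp
      simp only [hT, Finset.mem_filter, Finset.mem_univ, true_and]
      split_ifs <;> (try dsimp only at *) <;>
        (try simp only [Prod.mk.injEq, eq_self_iff_true, true_and, and_true, or_true, true_or]) <;> omega
    · rintro ⟨a, b, c⟩ ht
      simp only [hT, Finset.mem_filter, Finset.mem_univ, true_and] at ht
      split_ifs <;> (try dsimp only at *) <;>
        (try simp only [Prod.mk.injEq, eq_self_iff_true, true_and, and_true, or_true, true_or]) <;> omega
    · rintro ⟨a, b⟩ hp
      simp only [hP, Finset.mem_filter, Finset.mem_univ, true_and, not_or] at hp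
      split_ifs <;> (try dsimp only at *) <;>
        (try simp only [Prod.mk.injEq, eq_self_iff_true, true_and, and_true, or_true, true_or]) <;> omega
    · rintro ⟨a, b, c⟩ ht
      simp only [hT, Finset.mem_filter, Finset.mem_univ, true_and] at ht
      obtain ⟨⟨h12, h23⟩, hq⟩ := ht
      simp only at h12 h23 hq ⊢
      split_ifs with ha hb
      · rw [ha]
        exact min_eq_right (le_trans (min_le_left _ _) (ha ▸ hmax b))
      · rw [hb, min_eq_right (hmax c)]
      · have hc : c = m := (hq.resolve_left ha).resolve_left hb
        rw [hc, min_eq_left (hmax b)]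
  have h3 : 0 ≤ ∑ t ∈ T.filter (fun t => ¬(t.1 = m ∨ t.2.1 = m ∨ t.2.2 = m)),
      min (x t.1) (min (x t.2.1) (x t.2.2)) := by
    apply Finset.sum_nonneg
    intro t _
    exact le_min (hx _) (le_min (hx _) (hx _))
  have hS1 : ∑ i, x i = x m + ∑ i ∈ univ.erase m, x i :=
    (Finset.add_sum_erase univ x (mem_univ m)).symm
  linarith [hsplitP, hsplitT, h1, h2, h3, hS1]
end

section
/- Submodularity of the Soft QD Score: fix σ > 0 and a finite set Θ of solutions, each solution θ having quality f(θ) ≥ 0 and descriptor b(θ) ∈ ℝ^d. Define S(U) = ∫_{ℝ^d} max_{θ∈U} f(θ) exp(−‖b − b(θ)‖²/(2σ²)) db for nonempty finite U ⊆ Θ (and S(∅) = 0). Then for all U ⊆ V ⊆ Θ and any θ' ∉ V with quality f' ≥ 0 and descriptor b', S(U ∪ {θ'}) − S(U) ≥ S(V ∪ {θ'}) − S(V). -/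
/-!
For nonnegative qualities, `S U` is the integral of the upper envelope of the weighted Gaussians
indexed by `U` (the envelope of `∅` being `0`). Adding `θ'` raises the envelope at `x` from `m`
to `max (g θ' x) m`, a gain of `max (g θ' x - m) 0`, which decreases as `m` grows; since the
envelope of `U` lies below that of `V`, integrating gives the inequality.
-/

open MeasureTheory Real Finset

theorem integrable_exp_neg_mul_norm_sub_sq {V : Type*} [NormedAddCommGroup V]
    [InnerProductSpace ℝ V] [FiniteDimensional ℝ V] [MeasurableSpace V] [BorelSpace V]
    {b : ℝ} (hb : 0 < b) (c : V) :
    Integrable (fun x : V => exp (-b * ‖x - c‖ ^ 2)) := by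
  have h := (GaussianFourier.integrable_cexp_neg_mul_sq_norm_add (b := (b : ℂ)) (V := V)
    (by simpa using hb) 0 0).norm
  have h' : Integrable (fun x : V => exp (-b * ‖x‖ ^ 2)) :=
    h.congr (Filter.Eventually.of_forall fun x => by
      simp [Complex.norm_exp, ← Complex.ofReal_pow, Complex.ofReal_re])
  exact h'.comp_sub_right c

theorem max_sub_le_max_sub_of_le {G : Type*} [AddCommGroup G] [LinearOrder G]
    [IsOrderedAddMonoid G] {a u v : G} (huv : u ≤ v) : max a v - v ≤ max a u - u := by
  rw [← max_sub_sub_right, ← max_sub_sub_right, sub_self, sub_self]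
  exact max_le_max (sub_le_sub_left huv a) le_rfl

section UpperEnvelope

variable {ι α : Type*} (g : ι → α → ℝ)

noncomputable def upperEnvelope (U : Finset ι) (x : α) : ℝ :=
  if h : U.Nonempty then U.sup' h (g · x) else 0

variable {g}

theorem upperEnvelope_nonneg (hg : ∀ i x, 0 ≤ g i x) (U : Finset ι) (x : α) :
    0 ≤ upperEnvelope g U x := by
  unfold upperEnvelope
  split_ifs with h
  · obtain ⟨i, hi⟩ := h
    exact (hg i x).trans (le_sup' (g · x) hi)
  · exact le_rfl

theorem upperEnvelope_insert [DecidableEq ι] (hg : ∀ i x, 0 ≤ g i x) (a : ι) (U : Finset ι)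
    (x : α) : upperEnvelope g (insert a U) x = max (g a x) (upperEnvelope g U x) := by
  rcases U.eq_empty_or_nonempty with rfl | hU
  · simp [upperEnvelope, hg a x]
  · simp [upperEnvelope, hU, sup'_insert]

theorem upperEnvelope_mono (hg : ∀ i x, 0 ≤ g i x) {U V : Finset ι} (hUV : U ⊆ V) (x : α) :
    upperEnvelope g U x ≤ upperEnvelope g V x := by
  rcases U.eq_empty_or_nonempty with rfl | hU
  · simpa [upperEnvelope] using upperEnvelope_nonneg hg V x
  · simp only [upperEnvelope, hU, hU.mono hUV, dite_true]
    exact sup'_mono _ hUV hU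

variable [MeasurableSpace α] {μ : Measure α}

theorem integral_upperEnvelope (U : Finset ι) :
    ∫ x, upperEnvelope g U x ∂μ =
      if h : U.Nonempty then ∫ x, U.sup' h (g · x) ∂μ else 0 := by
  unfold upperEnvelope
  split_ifs <;> simp

theorem integrable_upperEnvelope [DecidableEq ι] (hg : ∀ i x, 0 ≤ g i x)
    (hint : ∀ i, Integrable (g i) μ) (U : Finset ι) : Integrable (upperEnvelope g U) μ := by
  induction U using Finset.induction_on with
  | empty =>
    rw [show upperEnvelope g (∅ : Finset ι) = 0 from funext fun x => by simp [upperEnvelope]]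
    exact integrable_zero α ℝ μ
  | insert a U _ ih =>
    rw [show upperEnvelope g (insert a U) = g a ⊔ upperEnvelope g U from
      funext (upperEnvelope_insert hg a U)]
    exact (hint a).sup ih

theorem integral_upperEnvelope_insert_sub_le_of_subset [DecidableEq ι] (hg : ∀ i x, 0 ≤ g i x)
    (hint : ∀ i, Integrable (g i) μ) {U V : Finset ι} (hUV : U ⊆ V) (a : ι) :
    ∫ x, upperEnvelope g (insert a V) x ∂μ - ∫ x, upperEnvelope g V x ∂μ ≤
      ∫ x, upperEnvelope g (insert a U) x ∂μ - ∫ x, upperEnvelope g U x ∂μ := by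
  have hI := integrable_upperEnvelope hg hint
  rw [← integral_sub (hI _) (hI V), ← integral_sub (hI _) (hI U)]
  refine integral_mono ((hI _).sub (hI V)) ((hI _).sub (hI U)) fun x => ?_
  simp only [upperEnvelope_insert hg]
  exact max_sub_le_max_sub_of_le (upperEnvelope_mono hg hUV x)

end UpperEnvelope

theorem softQD_submodular_general {ι : Type*} [DecidableEq ι] (d : ℕ) (σ : ℝ) (hσ : 0 < σ)
    (f : ι → ℝ) (hf : ∀ θ, 0 ≤ f θ)
    (bb : ι → EuclideanSpace ℝ (Fin d))
    (S : Finset ι → ℝ)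
    (hS : ∀ U : Finset ι, S U =
      if h : U.Nonempty then
        ∫ x : EuclideanSpace ℝ (Fin d),
          U.sup' h (fun θ => f θ * Real.exp (-‖x - bb θ‖ ^ 2 / (2 * σ ^ 2)))
      else 0)
    (U V : Finset ι) (hUV : U ⊆ V)
    (θ' : ι) :
    S (insert θ' V) - S V ≤ S (insert θ' U) - S U := by
  set g : ι → EuclideanSpace ℝ (Fin d) → ℝ :=
    fun θ x => f θ * exp (-‖x - bb θ‖ ^ 2 / (2 * σ ^ 2))
  have hg : ∀ θ x, 0 ≤ g θ x := fun θ x => mul_nonneg (hf θ) (exp_nonneg _)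
  have hint : ∀ θ, Integrable (g θ) := fun θ => by
    refine ((integrable_exp_neg_mul_norm_sub_sq (b := 1 / (2 * σ ^ 2)) (by positivity)
      (bb θ)).const_mul (f θ)).congr (Filter.Eventually.of_forall fun x => ?_)
    simp only [g]
    ring_nf
  have hSg : ∀ W, S W = ∫ x, upperEnvelope g W x := fun W => by
    rw [hS, integral_upperEnvelope]
  simpa only [hSg] using integral_upperEnvelope_insert_sub_le_of_subset hg hint hUV θ'

theorem softQD_submodular {ι : Type*} [DecidableEq ι] (d : ℕ) (σ : ℝ) (hσ : 0 < σ)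
    (Θ : Finset ι) (f : ι → ℝ) (hf : ∀ θ, 0 ≤ f θ)
    (bb : ι → EuclideanSpace ℝ (Fin d))
    (S : Finset ι → ℝ)
    (hS : ∀ U : Finset ι, S U =
      if h : U.Nonempty then
        ∫ x : EuclideanSpace ℝ (Fin d),
          U.sup' h (fun θ => f θ * Real.exp (-‖x - bb θ‖ ^ 2 / (2 * σ ^ 2)))
      else 0)
    (U V : Finset ι) (hUV : U ⊆ V) (hVΘ : V ⊆ Θ)
    (θ' : ι) (hθ' : θ' ∉ V) :
    S (insert θ' V) - S V ≤ S (insert θ' U) - S U :=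
  softQD_submodular_general d σ hσ f hf bb S hS U V hUV θ'
end

section
/- Limiting equivalence of Soft QD Score and the sum of qualities: let f_1, …, f_N ≥ 0 and distinct b_1, …, b_N ∈ ℝ^d. Define S(σ) = ∫_{ℝ^d} max_{1≤n≤N} f_n exp(−‖b − b_n‖²/(2σ²)) db. Then lim_{σ→0⁺} S(σ)/(2πσ²)^{d/2} = Σ_{n=1}^{N} f_n. -/
/-!
Write `g_n b = f_n exp (-‖b - b_n‖² / s)` with `s = 2σ²`, so that `∫ g_n = f_n (π s)^(d/2)`.
Since the maximum of the `g_n` is at most their sum, the normalised integral is at most `∑ f_n`.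
Conversely, every `g_n` other than the largest one is at most its geometric mean with the largest,
so `∑ g_n ≤ max g_n + ∑_{n ≠ m} √(g_n g_m)`. By Apollonius' theorem `√(g_n g_m)` is the Gaussian
centred at the midpoint of `b_n` and `b_m`, scaled by `√(f_n f_m) exp (-‖b_n - b_m‖² / (4 s))`;
as the centres are distinct, these factors vanish when `s → 0⁺`, and the two bounds squeeze.
-/

open MeasureTheory Real Finset Filter Topology Module

lemma Finset.sum_le_sup'_add_sum_sqrt_mul {ι : Type*} [DecidableEq ι] {t : Finset ι}
    (ht : t.Nonempty) {x : ι → ℝ} (hx : ∀ i ∈ t, 0 ≤ x i) :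
    ∑ i ∈ t, x i ≤ t.sup' ht x + ∑ i ∈ t, ∑ j ∈ t.erase i, √(x i * x j) := by
  obtain ⟨k, hk, hmax⟩ := t.exists_mem_eq_sup' ht x
  rw [← add_sum_erase t x hk, hmax]
  gcongr
  calc ∑ i ∈ t.erase k, x i
      ≤ ∑ i ∈ t.erase k, √(x i * x k) := by
        refine sum_le_sum fun i hi => ?_
        have hit := mem_of_mem_erase hi
        calc x i = √(x i * x i) := (sqrt_mul_self (hx i hit)).symm
          _ ≤ √(x i * x k) :=
            sqrt_le_sqrt (mul_le_mul_of_nonneg_left (hmax ▸ t.le_sup' x hit) (hx i hit))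
    _ ≤ ∑ i ∈ t.erase k, ∑ j ∈ t.erase i, √(x i * x j) :=
        sum_le_sum fun i hi => single_le_sum (f := fun j => √(x i * x j))
          (fun _ _ => sqrt_nonneg _) (mem_erase.2 ⟨(ne_of_mem_erase hi).symm, hk⟩)
    _ ≤ ∑ i ∈ t, ∑ j ∈ t.erase i, √(x i * x j) :=
        sum_le_sum_of_subset_of_nonneg (erase_subset k t) fun _ _ _ =>
          sum_nonneg fun _ _ => sqrt_nonneg _

section Envelope

variable {α ι : Type*} [MeasurableSpace α] {μ : Measure α} {t : Finset ι} (ht : t.Nonempty)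
  {g : ι → α → ℝ}

lemma integrable_finset_sup' (hg : ∀ i ∈ t, Integrable (g i) μ) :
    Integrable (fun a => t.sup' ht (g · a)) μ := by
  have h := Finset.sup'_induction ht g (p := (Integrable · μ)) (fun _ h₁ _ h₂ => h₁.sup h₂) hg
  exact h.congr (.of_forall fun a => Finset.sup'_apply ht g a)

lemma integral_finset_sup'_le (hg0 : ∀ i ∈ t, ∀ a, 0 ≤ g i a)
    (hg : ∀ i ∈ t, Integrable (g i) μ) :
    ∫ a, t.sup' ht (g · a) ∂μ ≤ ∑ i ∈ t, ∫ a, g i a ∂μ := by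
  rw [← integral_finsetSum t hg]
  exact integral_mono (integrable_finset_sup' ht hg) (integrable_finsetSum t hg) fun a =>
    sup'_le ht _ fun i hi => single_le_sum (fun j hj => hg0 j hj a) hi

lemma sum_integral_le_integral_finset_sup'_add [DecidableEq ι] (hg0 : ∀ i ∈ t, ∀ a, 0 ≤ g i a)
    (hg : ∀ i ∈ t, Integrable (g i) μ)
    (hgg : ∀ i ∈ t, ∀ j ∈ t.erase i, Integrable (fun a => √(g i a * g j a)) μ) :
    ∑ i ∈ t, ∫ a, g i a ∂μ ≤
      ∫ a, t.sup' ht (g · a) ∂μ + ∑ i ∈ t, ∑ j ∈ t.erase i, ∫ a, √(g i a * g j a) ∂μ := by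
  have hpairs : Integrable (fun a => ∑ i ∈ t, ∑ j ∈ t.erase i, √(g i a * g j a)) μ :=
    integrable_finsetSum t fun i hi => integrable_finsetSum _ (hgg i hi)
  calc ∑ i ∈ t, ∫ a, g i a ∂μ = ∫ a, ∑ i ∈ t, g i a ∂μ := (integral_finsetSum t hg).symm
    _ ≤ ∫ a, (t.sup' ht (g · a) + ∑ i ∈ t, ∑ j ∈ t.erase i, √(g i a * g j a)) ∂μ :=
        integral_mono (integrable_finsetSum t hg) ((integrable_finset_sup' ht hg).add hpairs)
          fun a => t.sum_le_sup'_add_sum_sqrt_mul ht fun i hi => hg0 i hi a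
    _ = _ := by
        rw [integral_add (integrable_finset_sup' ht hg) hpairs,
          integral_finsetSum t fun i hi => integrable_finsetSum _ (hgg i hi)]
        exact congrArg _ (sum_congr rfl fun i hi => integral_finsetSum _ (hgg i hi))

end Envelope

section Gaussian

variable {V : Type*} [NormedAddCommGroup V] [InnerProductSpace ℝ V]

lemma sqrt_mul_exp_mul_mul_exp {u v : ℝ} (hu : 0 ≤ u) (hv : 0 ≤ v) (s : ℝ) (p q b : V) :
    √(u * exp (-‖b - p‖ ^ 2 / s) * (v * exp (-‖b - q‖ ^ 2 / s))) =
      √(u * v) * exp (-‖p - q‖ ^ 2 / (4 * s)) * exp (-‖b - midpoint ℝ p q‖ ^ 2 / s) := by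
  have apollonius :=
    EuclideanGeometry.dist_sq_add_dist_sq_eq_two_mul_dist_midpoint_sq_add_half_dist_sq b p q
  simp only [dist_eq_norm] at apollonius
  rw [mul_mul_mul_comm, sqrt_mul (mul_nonneg hu hv), ← exp_add, ← exp_half, mul_assoc,
    ← exp_add]
  congr 2
  rw [neg_div, neg_div, ← neg_add, ← add_div, apollonius]
  ring

variable [FiniteDimensional ℝ V] [MeasurableSpace V] [BorelSpace V]

lemma integral_exp_neg_norm_sub_sq_div {s : ℝ} (hs : 0 < s) (c : V) :
    ∫ b : V, exp (-‖b - c‖ ^ 2 / s) = (π * s) ^ (finrank ℝ V / 2 : ℝ) := by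
  have h := GaussianFourier.integral_rexp_neg_mul_sq_norm (V := V) (inv_pos.2 hs)
  rw [div_inv_eq_mul] at h
  rw [integral_sub_right_eq_self (fun b : V => exp (-‖b‖ ^ 2 / s)) c, ← h]
  congr 1 with b
  ring_nf

lemma integrable_exp_neg_norm_sub_sq_div {s : ℝ} (hs : 0 < s) (c : V) :
    Integrable fun b : V => exp (-‖b - c‖ ^ 2 / s) :=
  .of_integral_ne_zero <| by rw [integral_exp_neg_norm_sub_sq_div hs]; positivity

end Gaussian

lemma tendsto_exp_neg_div_nhdsGT_zero {D : ℝ} (hD : 0 < D) :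
    Tendsto (fun s => exp (-D / s)) (𝓝[>] 0) (𝓝 0) := by
  refine tendsto_exp_atBot.comp ?_
  exact (tendsto_inv_nhdsGT_zero.const_mul_atTop_of_neg (neg_lt_zero.2 hD)).congr fun s =>
    (div_eq_mul_inv _ _).symm

section GaussianEnvelope

variable {V ι : Type*} [NormedAddCommGroup V] (t : Finset ι) (f : ι → ℝ) (c : ι → V)

/-- Up to the factor `(π s) ^ (dim V / 2)`, the summed integrals of `√(g_i g_j)` over ordered
pairs `i ≠ j`, where `g_i b = f i * exp (-‖b - c i‖ ^ 2 / s)`. -/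
noncomputable def gaussianOverlap [DecidableEq ι] (s : ℝ) : ℝ :=
  ∑ i ∈ t, ∑ j ∈ t.erase i, √(f i * f j) * exp (-‖c i - c j‖ ^ 2 / (4 * s))

lemma tendsto_gaussianOverlap [DecidableEq ι] (hc : Set.InjOn c t) :
    Tendsto (gaussianOverlap t f c) (𝓝[>] 0) (𝓝 0) := by
  have hpair : ∀ i ∈ t, ∀ j ∈ t.erase i, Tendsto
      (fun s => √(f i * f j) * exp (-‖c i - c j‖ ^ 2 / (4 * s))) (𝓝[>] 0) (𝓝 0) := by
    intro i hi j hj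
    have hcij : 0 < ‖c i - c j‖ := norm_pos_iff.2 <| sub_ne_zero.2 fun h =>
      ne_of_mem_erase hj (hc (mem_of_mem_erase hj) hi h.symm)
    simpa only [neg_div, div_div, mul_zero] using
      (tendsto_exp_neg_div_nhdsGT_zero (by positivity : 0 < ‖c i - c j‖ ^ 2 / 4)).const_mul
        √(f i * f j)
  unfold gaussianOverlap
  simpa using tendsto_finsetSum t fun i hi => tendsto_finsetSum _ (hpair i hi)

variable [InnerProductSpace ℝ V] [FiniteDimensional ℝ V] [MeasurableSpace V] [BorelSpace V] {t f}
  (ht : t.Nonempty)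

lemma integral_sup'_gaussian_le {s : ℝ} (hs : 0 < s) (hf : ∀ i ∈ t, 0 ≤ f i) :
    ∫ b, t.sup' ht (fun i => f i * exp (-‖b - c i‖ ^ 2 / s)) ≤
      (∑ i ∈ t, f i) * (π * s) ^ (finrank ℝ V / 2 : ℝ) := by
  calc _ ≤ ∑ i ∈ t, ∫ b, f i * exp (-‖b - c i‖ ^ 2 / s) :=
        integral_finset_sup'_le ht (fun i hi b => mul_nonneg (hf i hi) (exp_nonneg _))
          fun i _ => (integrable_exp_neg_norm_sub_sq_div hs _).const_mul _
    _ = _ := by simp only [integral_const_mul, integral_exp_neg_norm_sub_sq_div hs, sum_mul]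

lemma sub_gaussianOverlap_mul_le_integral_sup'_gaussian [DecidableEq ι] {s : ℝ} (hs : 0 < s)
    (hf : ∀ i ∈ t, 0 ≤ f i) :
    (∑ i ∈ t, f i - gaussianOverlap t f c s) * (π * s) ^ (finrank ℝ V / 2 : ℝ) ≤
      ∫ b, t.sup' ht (fun i => f i * exp (-‖b - c i‖ ^ 2 / s)) := by
  have hsqrt : ∀ i ∈ t, ∀ j ∈ t.erase i, (fun b => √(f i * exp (-‖b - c i‖ ^ 2 / s) *
      (f j * exp (-‖b - c j‖ ^ 2 / s)))) = fun b => √(f i * f j) *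
        exp (-‖c i - c j‖ ^ 2 / (4 * s)) * exp (-‖b - midpoint ℝ (c i) (c j)‖ ^ 2 / s) :=
    fun i hi j hj => funext fun b =>
      sqrt_mul_exp_mul_mul_exp (hf i hi) (hf j (mem_of_mem_erase hj)) s _ _ b
  have h := sum_integral_le_integral_finset_sup'_add ht
    (fun i hi b => mul_nonneg (hf i hi) (exp_nonneg _))
    (fun i _ => (integrable_exp_neg_norm_sub_sq_div hs _).const_mul _)
    fun i hi j hj => hsqrt i hi j hj ▸ (integrable_exp_neg_norm_sub_sq_div hs _).const_mul _
  have hoverlap : ∑ i ∈ t, ∑ j ∈ t.erase i, ∫ b, √(f i * exp (-‖b - c i‖ ^ 2 / s) *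
      (f j * exp (-‖b - c j‖ ^ 2 / s))) =
        gaussianOverlap t f c s * (π * s) ^ (finrank ℝ V / 2 : ℝ) := by
    rw [gaussianOverlap, sum_mul]
    refine sum_congr rfl fun i hi => ?_
    rw [sum_mul]
    refine sum_congr rfl fun j hj => ?_
    rw [hsqrt i hi j hj, integral_const_mul, integral_exp_neg_norm_sub_sq_div hs]
  rw [hoverlap] at h
  simp only [integral_const_mul, integral_exp_neg_norm_sub_sq_div hs, ← sum_mul] at h
  linarith

theorem tendsto_integral_sup'_gaussian_div [DecidableEq ι] (hf : ∀ i ∈ t, 0 ≤ f i)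
    (hc : Set.InjOn c t) :
    Tendsto (fun s => (∫ b, t.sup' ht (fun i => f i * exp (-‖b - c i‖ ^ 2 / s))) /
      (π * s) ^ (finrank ℝ V / 2 : ℝ)) (𝓝[>] 0) (𝓝 (∑ i ∈ t, f i)) := by
  have hlower : Tendsto (fun s => ∑ i ∈ t, f i - gaussianOverlap t f c s) (𝓝[>] 0)
      (𝓝 (∑ i ∈ t, f i)) := by
    simpa using tendsto_const_nhds.sub (tendsto_gaussianOverlap t f c hc)
  refine tendsto_of_tendsto_of_tendsto_of_le_of_le' hlower tendsto_const_nhds ?_ ?_ <;>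
    filter_upwards [self_mem_nhdsWithin] with s (hs : 0 < s)
  · exact (le_div_iff₀ (by positivity)).2
      (sub_gaussianOverlap_mul_le_integral_sup'_gaussian c ht hs hf)
  · exact (div_le_iff₀ (by positivity)).2 (integral_sup'_gaussian_le c ht hs hf)

end GaussianEnvelope

theorem softQD_limiting_equivalence (d N : ℕ) (hN : 0 < N)
    (f : Fin N → ℝ) (hf : ∀ n, 0 ≤ f n)
    (bb : Fin N → EuclideanSpace ℝ (Fin d)) (hb : Function.Injective bb) :
    Filter.Tendsto
      (fun σ : ℝ =>
        (∫ b : EuclideanSpace ℝ (Fin d),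
            Finset.univ.sup' (Finset.univ_nonempty_iff.mpr ⟨⟨0, hN⟩⟩)
              (fun n : Fin N => f n * Real.exp (-‖b - bb n‖ ^ 2 / (2 * σ ^ 2)))) /
          (2 * π * σ ^ 2) ^ ((d : ℝ) / 2))
      (nhdsWithin 0 (Set.Ioi 0)) (nhds (∑ n, f n)) := by
  have hvariance : Tendsto (fun σ : ℝ => 2 * σ ^ 2) (𝓝[>] 0) (𝓝[>] 0) := by
    refine tendsto_nhdsWithin_iff.2 ⟨?_, ?_⟩
    · exact (Continuous.tendsto' (by fun_prop) 0 0 (by simp)).mono_left nhdsWithin_le_nhds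
    · filter_upwards [self_mem_nhdsWithin] with σ (hσ : 0 < σ)
      exact Set.mem_Ioi.2 (by positivity)
  have h := (tendsto_integral_sup'_gaussian_div bb (univ_nonempty_iff.mpr ⟨⟨0, hN⟩⟩)
    (fun n _ => hf n) hb.injOn).comp hvariance
  simp only [finrank_euclideanSpace_fin] at h
  refine h.congr fun σ => ?_
  rw [Function.comp_apply, show π * (2 * σ ^ 2) = 2 * π * σ ^ 2 by ring]
end

section
/- Lower bound on the Soft QD Score (Theorem 1): for f_1, …, f_N ≥ 0, b_1, …, b_N ∈ ℝ^d, and σ > 0, ∫_{ℝ^d} max_n f_n exp(−‖b − b_n‖²/(2σ²)) db ≥ (2πσ²)^{d/2} [ Σ_{n=1}^{N} f_n − Σ_{1≤i<j≤N} √(f_i f_j) exp(−‖b_i − b_j‖²/(8σ²)) ]. -/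
open MeasureTheory Real Finset

section aux

variable {d : ℕ}
local notation "E" => EuclideanSpace ℝ (Fin d)

lemma sqd_gauss_integrable {a : ℝ} (ha : 0 < a) (c : EuclideanSpace ℝ (Fin d)) :
    Integrable (fun b : EuclideanSpace ℝ (Fin d) => rexp (-a * ‖b - c‖ ^ 2)) := by
  have h : Integrable (fun b : EuclideanSpace ℝ (Fin d) => rexp (-a * ‖b‖ ^ 2)) := by
    have := (GaussianFourier.integrable_cexp_neg_mul_sq_norm_add
      (b := (a : ℂ)) (by simpa using ha) 0 (0 : E)).re
    refine this.congr ?_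
    filter_upwards with v
    simp [Complex.exp_ofReal_re, ← Complex.ofReal_pow, ← Complex.ofReal_neg,
      ← Complex.ofReal_mul, ← Complex.ofReal_exp]
  exact h.comp_sub_right c

lemma sqd_gauss_integral {a : ℝ} (ha : 0 < a) (c : EuclideanSpace ℝ (Fin d)) :
    ∫ b : EuclideanSpace ℝ (Fin d), rexp (-a * ‖b - c‖ ^ 2) = (π / a) ^ ((d : ℝ) / 2) := by
  rw [show (fun b : EuclideanSpace ℝ (Fin d) => rexp (-a * ‖b - c‖ ^ 2))
        = fun b : EuclideanSpace ℝ (Fin d) => (fun v : E => rexp (-a * ‖v‖ ^ 2)) (b - c) from rfl,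
    integral_sub_right_eq_self (fun v : E => rexp (-a * ‖v‖ ^ 2)) c,
    GaussianFourier.integral_rexp_neg_mul_sq_norm ha,
    finrank_euclideanSpace_fin]

lemma sqd_gauss_integrable' {σ : ℝ} (hσ : 0 < σ) (c : EuclideanSpace ℝ (Fin d)) :
    Integrable (fun b : EuclideanSpace ℝ (Fin d) => rexp (-‖b - c‖ ^ 2 / (2 * σ ^ 2))) := by
  have h : ∀ b : EuclideanSpace ℝ (Fin d), -‖b - c‖ ^ 2 / (2 * σ ^ 2) = -(1 / (2 * σ ^ 2)) * ‖b - c‖ ^ 2 := by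
    intro b; ring
  simp_rw [h]
  exact sqd_gauss_integrable (by positivity) c

lemma sqd_gauss_integral' {σ : ℝ} (hσ : 0 < σ) (c : EuclideanSpace ℝ (Fin d)) :
    ∫ b : EuclideanSpace ℝ (Fin d), rexp (-‖b - c‖ ^ 2 / (2 * σ ^ 2)) = (2 * π * σ ^ 2) ^ ((d : ℝ) / 2) := by
  have h : ∀ b : EuclideanSpace ℝ (Fin d), -‖b - c‖ ^ 2 / (2 * σ ^ 2) = -(1 / (2 * σ ^ 2)) * ‖b - c‖ ^ 2 := by
    intro b; ring
  simp_rw [h]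
  rw [sqd_gauss_integral (by positivity) c]
  congr 1
  field_simp

lemma sqd_parallelogram (x y b : EuclideanSpace ℝ (Fin d)) :
    ‖b - x‖ ^ 2 + ‖b - y‖ ^ 2
      = 2 * ‖b - (2 : ℝ)⁻¹ • (x + y)‖ ^ 2 + ‖x - y‖ ^ 2 / 2 := by
  have hpl := parallelogram_law_with_norm ℝ (b - x) (b - y)
  have h1 : (b - x) + (b - y) = (2 : ℝ) • (b - (2 : ℝ)⁻¹ • (x + y)) := by
    rw [smul_sub, smul_inv_smul₀ (by norm_num : (2:ℝ) ≠ 0)]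
    module
  have h2 : (b - x) - (b - y) = y - x := by abel
  rw [h1, h2] at hpl
  rw [norm_smul, norm_sub_rev y x] at hpl
  simp only [Real.norm_ofNat] at hpl
  nlinarith [hpl]

lemma sqd_min_le_sqrt {a b : ℝ} (ha : 0 ≤ a) (hb : 0 ≤ b) :
    min a b ≤ Real.sqrt (a * b) := by
  rcases le_total a b with h | h
  · rw [min_eq_left h]
    calc a = Real.sqrt (a * a) := (Real.sqrt_mul_self ha).symm
    _ ≤ Real.sqrt (a * b) := Real.sqrt_le_sqrt (by nlinarith)
  · rw [min_eq_right h]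
    calc b = Real.sqrt (b * b) := (Real.sqrt_mul_self hb).symm
    _ ≤ Real.sqrt (a * b) := Real.sqrt_le_sqrt (by nlinarith)

lemma sqd_sqrt_exp (t : ℝ) : Real.sqrt (rexp t) = rexp (t / 2) := by
  rw [show rexp t = rexp (t / 2) ^ 2 by rw [sq, ← Real.exp_add]; ring_nf]
  exact Real.sqrt_sq (Real.exp_pos _).le

lemma sqd_min_bound {σ : ℝ} (hσ : 0 < σ) {fi fj : ℝ} (hfi : 0 ≤ fi) (hfj : 0 ≤ fj)
    (x y b : EuclideanSpace ℝ (Fin d)) :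
    min (fi * rexp (-‖b - x‖ ^ 2 / (2 * σ ^ 2))) (fj * rexp (-‖b - y‖ ^ 2 / (2 * σ ^ 2)))
      ≤ (Real.sqrt (fi * fj) * rexp (-‖x - y‖ ^ 2 / (8 * σ ^ 2)))
          * rexp (-‖b - (2 : ℝ)⁻¹ • (x + y)‖ ^ 2 / (2 * σ ^ 2)) := by
  set u := -‖b - x‖ ^ 2 / (2 * σ ^ 2)
  set v := -‖b - y‖ ^ 2 / (2 * σ ^ 2)
  have h1 : min (fi * rexp u) (fj * rexp v) ≤ Real.sqrt ((fi * rexp u) * (fj * rexp v)) :=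
    sqd_min_le_sqrt (by positivity) (by positivity)
  have h2 : (fi * rexp u) * (fj * rexp v) = (fi * fj) * rexp (u + v) := by
    rw [Real.exp_add]; ring
  rw [h2, Real.sqrt_mul (by positivity), sqd_sqrt_exp] at h1
  refine h1.trans_eq ?_
  rw [mul_assoc, ← Real.exp_add]
  congr 1
  rw [Real.exp_eq_exp]
  have hpar := sqd_parallelogram x y b
  have hσ2 : σ ^ 2 ≠ 0 := by positivity
  simp only [u, v]
  linear_combination (-1 / (4 * σ ^ 2)) * hpar

lemma sqd_sup'_integrable {N : ℕ} (g : Fin N → EuclideanSpace ℝ (Fin d) → ℝ)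
    (hg : ∀ n, Integrable (g n)) (s : Finset (Fin N)) (hs : s.Nonempty) :
    Integrable (fun b : EuclideanSpace ℝ (Fin d) => s.sup' hs (fun n => g n b)) := by
  induction hs using Finset.Nonempty.cons_induction with
  | singleton a => simpa using hg a
  | cons a s ha hs ih =>
      refine ((hg a).sup ih).congr ?_
      filter_upwards with b
      rw [Pi.sup_apply, Finset.sup'_cons (H := hs)]

lemma bonferroni {N : ℕ} (hN : 0 < N) (g : Fin N → ℝ) (hg : ∀ n, 0 ≤ g n) :
    (∑ n, g n) -
        ∑ p ∈ (Finset.univ : Finset (Fin N × Fin N)).filter (fun p => p.1 < p.2),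
          min (g p.1) (g p.2) ≤
      Finset.univ.sup' (Finset.univ_nonempty_iff.mpr ⟨⟨0, hN⟩⟩) g := by
  obtain ⟨m, -, hm⟩ := Finset.exists_mem_eq_sup'
    (Finset.univ_nonempty_iff.mpr ⟨(⟨0, hN⟩ : Fin N)⟩) g
  have hle : ∀ n, g n ≤ g m := fun n => hm ▸ Finset.le_sup' g (mem_univ n)
  rw [hm, sub_le_iff_le_add, ← sub_le_iff_le_add']
  rw [← Finset.sum_erase_eq_sub (mem_univ m)]
  set e : Fin N → Fin N × Fin N := fun n => if n < m then (n, m) else (m, n) with he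
  have hkey : ∀ n ∈ Finset.univ.erase m, g n = min (g (e n).1) (g (e n).2) := by
    intro n hn
    simp only [he]
    split <;> simp [min_eq_left (hle n), min_eq_right (hle n)]
  rw [Finset.sum_congr rfl hkey]
  rw [← Finset.sum_image (f := fun p : Fin N × Fin N => min (g p.1) (g p.2)) (g := e) ?inj]
  case inj =>
    intro n1 h1 n2 h2 hne
    have h1m : n1 ≠ m := Finset.ne_of_mem_erase h1
    have h2m : n2 ≠ m := Finset.ne_of_mem_erase h2
    simp only [he] at hne
    split_ifs at hne <;> simp_all [Prod.ext_iff]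
  refine Finset.sum_le_sum_of_subset_of_nonneg ?_ ?_
  · intro p hp
    simp only [Finset.mem_image, Finset.mem_erase] at hp
    obtain ⟨n, ⟨hnm, -⟩, rfl⟩ := hp
    simp only [Finset.mem_filter, Finset.mem_univ, true_and, he]
    rcases lt_or_gt_of_ne hnm with h | h
    · simp [h]
    · simp [h, not_lt_of_gt h]
  · intro p _ _
    exact le_min (hg p.1) (hg p.2)

end aux

set_option maxHeartbeats 1000000 in
theorem softQD_lower_bound (d N : ℕ) (hN : 0 < N) (σ : ℝ) (hσ : 0 < σ)
    (f : Fin N → ℝ) (hf : ∀ n, 0 ≤ f n)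
    (bb : Fin N → EuclideanSpace ℝ (Fin d)) :
    (2 * π * σ ^ 2) ^ ((d : ℝ) / 2) *
        ((∑ n, f n) -
          ∑ p ∈ (Finset.univ : Finset (Fin N × Fin N)).filter (fun p => p.1 < p.2),
            Real.sqrt (f p.1 * f p.2) *
              Real.exp (-‖bb p.1 - bb p.2‖ ^ 2 / (8 * σ ^ 2))) ≤
      ∫ b : EuclideanSpace ℝ (Fin d),
        Finset.univ.sup' (Finset.univ_nonempty_iff.mpr ⟨⟨0, hN⟩⟩)
          (fun n : Fin N => f n * Real.exp (-‖b - bb n‖ ^ 2 / (2 * σ ^ 2))) := by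
  set C : ℝ := (2 * π * σ ^ 2) ^ ((d : ℝ) / 2) with hC
  set g : Fin N → EuclideanSpace ℝ (Fin d) → ℝ := fun n b => f n * rexp (-‖b - bb n‖ ^ 2 / (2 * σ ^ 2)) with hg
  set P := (Finset.univ : Finset (Fin N × Fin N)).filter (fun p => p.1 < p.2) with hP
  have hgint : ∀ n, Integrable (g n) := fun n =>
    (sqd_gauss_integrable' hσ (bb n)).const_mul (f n)
  have hgI : ∀ n, ∫ b : EuclideanSpace ℝ (Fin d), g n b = f n * C := by
    intro n
    rw [show (fun b : EuclideanSpace ℝ (Fin d) => g n b) = fun b : EuclideanSpace ℝ (Fin d) =>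
        f n * rexp (-‖b - bb n‖ ^ 2 / (2 * σ ^ 2)) from rfl,
      integral_const_mul, sqd_gauss_integral' hσ (bb n)]
  have hminint : ∀ i j : Fin N, Integrable (fun b : EuclideanSpace ℝ (Fin d) => min (g i b) (g j b)) := fun i j =>
    (hgint i).inf (hgint j)
  -- integral of min bounded by closed form
  have hminI : ∀ i j : Fin N,
      ∫ b : EuclideanSpace ℝ (Fin d), min (g i b) (g j b)
        ≤ Real.sqrt (f i * f j) * rexp (-‖bb i - bb j‖ ^ 2 / (8 * σ ^ 2)) * C := by
    intro i j
    set m := (2 : ℝ)⁻¹ • (bb i + bb j)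
    have hint2 : Integrable (fun b : EuclideanSpace ℝ (Fin d) =>
        (Real.sqrt (f i * f j) * rexp (-‖bb i - bb j‖ ^ 2 / (8 * σ ^ 2)))
          * rexp (-‖b - m‖ ^ 2 / (2 * σ ^ 2))) :=
      (sqd_gauss_integrable' hσ m).const_mul _
    have hmono := integral_mono (hminint i j) hint2
      (fun b => sqd_min_bound hσ (hf i) (hf j) (bb i) (bb j) b)
    rw [integral_const_mul, sqd_gauss_integral' hσ m] at hmono
    exact hmono.trans_eq (by rw [hC])
  have hsupint : Integrable (fun b : EuclideanSpace ℝ (Fin d) =>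
      Finset.univ.sup' (Finset.univ_nonempty_iff.mpr ⟨⟨0, hN⟩⟩) (fun n => g n b)) :=
    sqd_sup'_integrable g hgint _ _
  have hSint : Integrable (fun b : EuclideanSpace ℝ (Fin d) =>
      (∑ n, g n b) - ∑ p ∈ P, min (g p.1 b) (g p.2 b)) := by
    refine Integrable.sub ?_ ?_
    · exact integrable_finset_sum _ (fun n _ => hgint n)
    · exact integrable_finset_sum _ (fun p _ => hminint p.1 p.2)
  have hstep : ∫ b : EuclideanSpace ℝ (Fin d), ((∑ n, g n b) - ∑ p ∈ P, min (g p.1 b) (g p.2 b))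
      ≤ ∫ b : EuclideanSpace ℝ (Fin d), Finset.univ.sup' (Finset.univ_nonempty_iff.mpr ⟨⟨0, hN⟩⟩)
          (fun n => g n b) := by
    refine integral_mono hSint hsupint (fun b => ?_)
    exact bonferroni hN (fun n => g n b)
      (fun n => mul_nonneg (hf n) (Real.exp_pos _).le)
  have hSval : ∫ b : EuclideanSpace ℝ (Fin d), ((∑ n, g n b) - ∑ p ∈ P, min (g p.1 b) (g p.2 b))
      = (∑ n, f n * C) - ∑ p ∈ P, ∫ b : EuclideanSpace ℝ (Fin d), min (g p.1 b) (g p.2 b) := by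
    rw [integral_sub (integrable_finset_sum _ (fun n _ => hgint n))
        (integrable_finset_sum _ (fun p _ => hminint p.1 p.2)),
      integral_finset_sum _ (fun n _ => hgint n),
      integral_finset_sum _ (fun p _ => hminint p.1 p.2)]
    simp_rw [hgI]
  refine le_trans ?_ hstep
  rw [hSval]
  have h1 : C * ((∑ n, f n) - ∑ p ∈ P, Real.sqrt (f p.1 * f p.2)
        * rexp (-‖bb p.1 - bb p.2‖ ^ 2 / (8 * σ ^ 2)))
      = (∑ n, f n * C) - ∑ p ∈ P, Real.sqrt (f p.1 * f p.2)
        * rexp (-‖bb p.1 - bb p.2‖ ^ 2 / (8 * σ ^ 2)) * C := by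
    rw [mul_sub, Finset.mul_sum, Finset.mul_sum]
    congr 1 <;> exact Finset.sum_congr rfl (fun _ _ => by ring)
  rw [h1]
  apply sub_le_sub_left
  exact Finset.sum_le_sum (fun p _ => hminI p.1 p.2)
end
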